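/- Inside regime behaviour of the Dyson solution: assume the spectral radius of S equals 1. There exist constants c, C > 0, depending only on s_* and s^*, such that for all η ∈ (0,1], all τ ∈ [0,1], every index i and a = 1, 2, the unique positive solution satisfies c·(η^{1/3} + (1−τ)^{1/2}) ≤ (v_a^τ(η))_i ≤ C·(η^{1/3} + (1−τ)^{1/2}). -/

import Mathlib

open Matrix

/-- The spectral radius of a real matrix (as a real number), computed via the
complex spectrum. -/
noncomputable def specRad {n : ℕ} (S : Matrix (Fin n) (Fin n) ℝ) : ℝ :=
  (spectralRadius ℂ (S.map (algebraMap ℝ ℂ))).toReal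

/-- The Dyson equation together with positivity of the solution. -/
def IsDysonSolution {n : ℕ} (S : Matrix (Fin n) (Fin n) ℝ) (τ η : ℝ)
    (v₁ v₂ : Fin n → ℝ) : Prop :=
  (∀ i, 0 < v₁ i) ∧ (∀ i, 0 < v₂ i) ∧
  (∀ i, 1 / v₁ i = η + S.mulVec v₂ i + τ / (η + S.transpose.mulVec v₁ i)) ∧
  (∀ i, 1 / v₂ i = η + S.transpose.mulVec v₁ i + τ / (η + S.mulVec v₂ i))

/-!
Write `w₁ = η + Sᵀ v₁`, `w₂ = η + S v₂` and `W = w₁ w₂`. The Dyson equation says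
`v_a (W + τ) = w_a`, so `v₁ w₂ = v₂ w₁`; summing and using `⟨v₁, S v₂⟩ = ⟨Sᵀ v₁, v₂⟩` shows that
`v₁` and `v₂` have the same mean `⟨v⟩`. Since all entries of `S` are of order `1/n`, both `w_a`
are comparable to `a = η + ⟨v⟩` at every index, hence `v_a ≍ a / (a² + τ)`, and averaging this
gives the a priori bound `a ≲ 1`. It remains to show `a ≍ η^{1/3} + √(1 - τ)`.

Because `ρ(S) = 1` and `v₂ > 0`, the Collatz–Wielandt inequalities (which follow from Gelfand's
formula for the `ℓ^∞` operator norm) give an index where `v₂ ≤ S v₂` and another one where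
`S v₂ ≤ v₂`. Through the equation these become `η (W + τ) ≤ w₂ (W + τ - 1)` and its reverse.
The first forces `W + τ > 1`, so `1 - τ < W ≲ a²` and `η < η (W + τ) ≲ a³`, which gives
`η^{1/3} + √(1 - τ) ≲ a`; the second gives `a (a² - (1 - τ)) ≲ η`, so `a ≲ η^{1/3} + √(1 - τ)`.
-/

open Filter Topology

attribute [local instance] Matrix.linftyOpNormedAddCommGroup Matrix.linftyOpNormedRing
  Matrix.linftyOpNormedAlgebra

namespace Matrix

section Nonneg

variable {ι : Type*} [Fintype ι] {S : Matrix ι ι ℝ}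

lemma mulVec_mono_of_nonneg (hS : ∀ i j, 0 ≤ S i j) {u v : ι → ℝ} (huv : u ≤ v) :
    S *ᵥ u ≤ S *ᵥ v := fun i =>
  Finset.sum_le_sum fun j _ => mul_le_mul_of_nonneg_left (huv j) (hS i j)

lemma mulVec_nonneg_of_nonneg (hS : ∀ i j, 0 ≤ S i j) {u : ι → ℝ} (hu : 0 ≤ u) (i : ι) :
    0 ≤ (S *ᵥ u) i := by
  simpa using mulVec_mono_of_nonneg hS hu i

lemma norm_map_ofReal_eq_norm_mulVec_one (hS : ∀ i j, 0 ≤ S i j) :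
    ‖S.map (algebraMap ℝ ℂ)‖ = ‖S *ᵥ 1‖ := by
  rw [linfty_opNorm_def, ← coe_nnnorm, Pi.nnnorm_def]
  congr 1
  refine Finset.sup_congr rfl fun i _ => NNReal.eq ?_
  simp [mulVec, dotProduct, abs_of_nonneg (hS i _),
    abs_of_nonneg (Finset.sum_nonneg fun j _ => hS i j)]

variable [DecidableEq ι]

lemma pow_mulVec_le_of_mulVec_le (hS : ∀ i j, 0 ≤ S i j) {u : ι → ℝ} {r : ℝ} (hr : 0 ≤ r)
    (h : S *ᵥ u ≤ r • u) (k : ℕ) : S ^ k *ᵥ u ≤ r ^ k • u := by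
  induction k with
  | zero => simp
  | succ k ih =>
    calc S ^ (k + 1) *ᵥ u = S *ᵥ (S ^ k *ᵥ u) := by rw [pow_succ', mulVec_mulVec]
      _ ≤ S *ᵥ (r ^ k • u) := mulVec_mono_of_nonneg hS ih
      _ = r ^ k • (S *ᵥ u) := mulVec_smul _ _ _
      _ ≤ r ^ k • (r • u) := smul_le_smul_of_nonneg_left h (pow_nonneg hr k)
      _ = r ^ (k + 1) • u := by rw [smul_smul, pow_succ]

lemma le_pow_mulVec_of_le_mulVec (hS : ∀ i j, 0 ≤ S i j) {u : ι → ℝ} {r : ℝ} (hr : 0 ≤ r)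
    (h : r • u ≤ S *ᵥ u) (k : ℕ) : r ^ k • u ≤ S ^ k *ᵥ u := by
  induction k with
  | zero => simp
  | succ k ih =>
    calc r ^ (k + 1) • u = r ^ k • (r • u) := by rw [smul_smul, pow_succ]
      _ ≤ r ^ k • (S *ᵥ u) := smul_le_smul_of_nonneg_left h (pow_nonneg hr k)
      _ = S *ᵥ (r ^ k • u) := (mulVec_smul _ _ _).symm
      _ ≤ S *ᵥ (S ^ k *ᵥ u) := mulVec_mono_of_nonneg hS ih
      _ = S ^ (k + 1) *ᵥ u := by rw [pow_succ', mulVec_mulVec]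

end Nonneg

section EntryBounds

variable {n : ℕ} {S : Matrix (Fin n) (Fin n) ℝ} {κ₀ κ₁ : ℝ}

lemma nonneg_of_entry_bounds (hκ₁ : 0 ≤ κ₁) (hS : ∀ i j, κ₁ / n ≤ S i j ∧ S i j ≤ κ₀ / n)
    (i j : Fin n) : 0 ≤ S i j :=
  (div_nonneg hκ₁ n.cast_nonneg).trans (hS i j).1

lemma mulVec_mem_Icc (hS : ∀ i j, κ₁ / n ≤ S i j ∧ S i j ≤ κ₀ / n) {v : Fin n → ℝ}
    (hv : 0 ≤ v) (i : Fin n) :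
    (S *ᵥ v) i ∈ Set.Icc (κ₁ * ((∑ j, v j) / n)) (κ₀ * ((∑ j, v j) / n)) := by
  have hmean (κ : ℝ) : κ * ((∑ j, v j) / n) = ∑ j, κ / n * v j := by
    rw [Finset.sum_div, Finset.mul_sum]
    exact Finset.sum_congr rfl fun j _ => by ring
  simp only [hmean, mulVec, dotProduct, Set.mem_Icc]
  exact ⟨Finset.sum_le_sum fun j _ => mul_le_mul_of_nonneg_right (hS i j).1 (hv j),
    Finset.sum_le_sum fun j _ => mul_le_mul_of_nonneg_right (hS i j).2 (hv j)⟩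

end EntryBounds

end Matrix

lemma tendsto_rpow_one_div_natCast {C : ℝ} (hC : 0 < C) :
    Tendsto (fun k : ℕ => C ^ (1 / (k : ℝ))) atTop (𝓝 1) := by
  simpa using tendsto_const_nhds.rpow tendsto_one_div_atTop_nhds_zero_nat (Or.inl hC.ne')

lemma mul_pow_rpow_one_div {C r : ℝ} (hC : 0 ≤ C) (hr : 0 ≤ r) {k : ℕ} (hk : k ≠ 0) :
    (C * r ^ k) ^ (1 / (k : ℝ)) = C ^ (1 / (k : ℝ)) * r := by
  rw [Real.mul_rpow hC (by positivity), one_div, Real.pow_rpow_inv_natCast hr hk]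

lemma le_of_tendsto_rpow_one_div_of_le_mul_pow {x : ℕ → ℝ} {ρ C r : ℝ} (hC : 0 < C)
    (hr : 0 ≤ r) (hx : Tendsto (fun k : ℕ => x k ^ (1 / (k : ℝ))) atTop (𝓝 ρ))
    (hle : ∀ k, 0 ≤ x k ∧ x k ≤ C * r ^ k) : ρ ≤ r := by
  refine le_of_tendsto_of_tendsto hx
    (by simpa only [one_mul] using (tendsto_rpow_one_div_natCast hC).mul_const r)
    (eventually_ne_atTop 0 |>.mono fun k hk => ?_)
  rw [← mul_pow_rpow_one_div hC.le hr hk]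
  exact Real.rpow_le_rpow (hle k).1 (hle k).2 (by positivity)

lemma le_of_tendsto_rpow_one_div_of_mul_pow_le {x : ℕ → ℝ} {ρ c r : ℝ} (hc : 0 < c)
    (hr : 0 ≤ r) (hx : Tendsto (fun k : ℕ => x k ^ (1 / (k : ℝ))) atTop (𝓝 ρ))
    (hle : ∀ k, c * r ^ k ≤ x k) : r ≤ ρ := by
  refine le_of_tendsto_of_tendsto
    (by simpa only [one_mul] using (tendsto_rpow_one_div_natCast hc).mul_const r) hx
    (eventually_ne_atTop 0 |>.mono fun k hk => ?_)
  rw [← mul_pow_rpow_one_div hc.le hr hk]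
  exact Real.rpow_le_rpow (by positivity) (hle k) (by positivity)

lemma tendsto_norm_pow_mulVec_one_specRad {n : ℕ} {S : Matrix (Fin n) (Fin n) ℝ}
    (hS : ∀ i j, 0 ≤ S i j) :
    Tendsto (fun k : ℕ => ‖S ^ k *ᵥ 1‖ ^ (1 / (k : ℝ))) atTop (𝓝 (specRad S)) := by
  set A := S.map (algebraMap ℝ ℂ)
  have hA : spectralRadius ℂ A ≠ ⊤ :=
    ne_top_of_le_ne_top (by finiteness) (spectrum.spectralRadius_le_pow_nnnorm_pow_one_div ℂ A 0)
  have hpow (k : ℕ) : ‖A ^ k‖ = ‖S ^ k *ᵥ 1‖ := by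
    rw [← norm_map_ofReal_eq_norm_mulVec_one (pow_apply_nonneg hS k)]
    exact congrArg norm ((algebraMap ℝ ℂ).mapMatrix.map_pow S k).symm
  show Tendsto _ _ (𝓝 (spectralRadius ℂ A).toReal)
  convert (ENNReal.tendsto_toReal hA).comp
    (spectrum.pow_nnnorm_pow_one_div_tendsto_nhds_spectralRadius A) using 2 with k
  rw [Function.comp_apply, ← ENNReal.toReal_rpow, ENNReal.coe_toReal, coe_nnnorm, hpow]

section CollatzWielandt

variable {n : ℕ} [NeZero n] {S : Matrix (Fin n) (Fin n) ℝ} {u : Fin n → ℝ} {r : ℝ}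

lemma specRad_le_of_mulVec_le (hS : ∀ i j, 0 ≤ S i j) (hu : ∀ i, 0 < u i) (hr : 0 ≤ r)
    (h : S *ᵥ u ≤ r • u) : specRad S ≤ r := by
  obtain ⟨i₀, hi₀⟩ := Finite.exists_min u
  have hle_norm (i : Fin n) : u i ≤ ‖u‖ := (Real.le_norm_self _).trans (norm_le_pi_norm u i)
  have hC : 0 < ‖u‖ / u i₀ := div_pos ((hu 0).trans_le (hle_norm 0)) (hu i₀)
  refine le_of_tendsto_rpow_one_div_of_le_mul_pow hC hr
    (tendsto_norm_pow_mulVec_one_specRad hS) fun k => ⟨norm_nonneg _, ?_⟩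
  have hpow := pow_apply_nonneg hS k
  refine (pi_norm_le_iff_of_nonneg (by positivity)).2 fun i => ?_
  rw [Real.norm_of_nonneg (mulVec_nonneg_of_nonneg hpow zero_le_one i), div_mul_eq_mul_div,
    le_div_iff₀ (hu i₀)]
  calc (S ^ k *ᵥ 1) i * u i₀ = (S ^ k *ᵥ (u i₀ • 1)) i := by simp [mulVec_smul, mul_comm]
    _ ≤ (S ^ k *ᵥ u) i := mulVec_mono_of_nonneg hpow (fun j => by simpa using hi₀ j) i
    _ ≤ r ^ k * u i := by simpa using pow_mulVec_le_of_mulVec_le hS hr h k i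
    _ ≤ ‖u‖ * r ^ k := by rw [mul_comm]; gcongr; exact hle_norm i

lemma le_specRad_of_le_mulVec (hS : ∀ i j, 0 ≤ S i j) (hu : ∀ i, 0 < u i) (hr : 0 ≤ r)
    (h : r • u ≤ S *ᵥ u) : r ≤ specRad S := by
  have hle_norm (i : Fin n) : u i ≤ ‖u‖ := (Real.le_norm_self _).trans (norm_le_pi_norm u i)
  have hnorm : 0 < ‖u‖ := (hu 0).trans_le (hle_norm 0)
  refine le_of_tendsto_rpow_one_div_of_mul_pow_le (div_pos (hu 0) hnorm) hr
    (tendsto_norm_pow_mulVec_one_specRad hS) fun k => ?_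
  rw [div_mul_eq_mul_div, div_le_iff₀ hnorm]
  calc u 0 * r ^ k ≤ (S ^ k *ᵥ u) 0 := by
        simpa [mul_comm] using le_pow_mulVec_of_le_mulVec hS hr h k 0
    _ ≤ (S ^ k *ᵥ (‖u‖ • 1)) 0 :=
        mulVec_mono_of_nonneg (pow_apply_nonneg hS k) (fun j => by simpa using hle_norm j) 0
    _ = (S ^ k *ᵥ 1) 0 * ‖u‖ := by simp [mulVec_smul, mul_comm]
    _ ≤ ‖S ^ k *ᵥ 1‖ * ‖u‖ := by
        gcongr; exact (Real.le_norm_self _).trans (norm_le_pi_norm _ _)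

lemma exists_le_mulVec_of_specRad_eq_one (hS : ∀ i j, 0 ≤ S i j) (hu : ∀ i, 0 < u i)
    (h1 : specRad S = 1) : ∃ i, u i ≤ (S *ᵥ u) i := by
  by_contra! h
  obtain ⟨i₀, hi₀⟩ := Finite.exists_max fun i => (S *ᵥ u) i / u i
  have hr : S *ᵥ u ≤ max 0 ((S *ᵥ u) i₀ / u i₀) • u := fun i => by
    rw [Pi.smul_apply, smul_eq_mul, ← div_le_iff₀ (hu i)]
    exact (hi₀ i).trans (le_max_right _ _)
  have hr1 : max 0 ((S *ᵥ u) i₀ / u i₀) < 1 := max_lt one_pos ((div_lt_one (hu i₀)).2 (h i₀))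
  linarith [specRad_le_of_mulVec_le hS hu (le_max_left _ _) hr]

lemma exists_mulVec_le_of_specRad_eq_one (hS : ∀ i j, 0 ≤ S i j) (hu : ∀ i, 0 < u i)
    (h1 : specRad S = 1) : ∃ i, (S *ᵥ u) i ≤ u i := by
  by_contra! h
  obtain ⟨i₀, hi₀⟩ := Finite.exists_min fun i => (S *ᵥ u) i / u i
  have hr : 1 < (S *ᵥ u) i₀ / u i₀ := (one_lt_div (hu i₀)).2 (h i₀)
  have := le_specRad_of_le_mulVec hS hu (by linarith) fun i => by
    rw [Pi.smul_apply, smul_eq_mul, ← le_div_iff₀ (hu i)]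
    exact hi₀ i
  linarith

end CollatzWielandt

lemma rpow_one_third_le_iff {x y : ℝ} (hx : 0 ≤ x) (hy : 0 ≤ y) :
    x ^ ((1 : ℝ) / 3) ≤ y ↔ x ≤ y ^ 3 := by
  rw [one_div, Real.rpow_inv_le_iff_of_pos hx hy (by norm_num)]
  norm_cast

lemma le_rpow_one_third_iff {x y : ℝ} (hx : 0 ≤ x) (hy : 0 ≤ y) :
    x ≤ y ^ ((1 : ℝ) / 3) ↔ x ^ 3 ≤ y := by
  rw [one_div, Real.le_rpow_inv_iff_of_pos hx hy (by norm_num)]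
  norm_cast

lemma add_le_one_add_div_sq {κ₀ κ₁ η μ τ : ℝ} (hκ₁ : 0 < κ₁) (hκ₀ : 0 ≤ κ₀) (hη1 : η ≤ 1)
    (hμ : 0 ≤ μ) (hτ : 0 ≤ τ) (h : μ * ((κ₁ * (η + μ)) ^ 2 + τ) ≤ κ₀ * (η + μ)) :
    η + μ ≤ 1 + κ₀ / κ₁ ^ 2 := by
  rcases le_or_gt (η + μ) 1 with ha | ha
  · linarith [div_nonneg hκ₀ (sq_nonneg κ₁)]
  have hμa : μ * κ₁ ^ 2 * (η + μ) ≤ κ₀ := by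
    refine le_of_mul_le_mul_right ?_ (by linarith : 0 < η + μ)
    nlinarith [mul_nonneg hμ hτ]
  rw [← sub_le_iff_le_add', le_div_iff₀ (by positivity)]
  nlinarith [mul_nonneg hμ (sq_nonneg κ₁)]

lemma rpow_one_third_add_sqrt_le {U w W η τ : ℝ} (hw : 0 ≤ w) (hwU : w ≤ U) (hW : 0 < W)
    (hWU : W ≤ U ^ 2) (hη : 0 < η) (hτ : 0 ≤ τ) (hτ1 : τ ≤ 1)
    (h : η * (W + τ) ≤ w * (W + τ - 1)) : η ^ ((1 : ℝ) / 3) + √(1 - τ) ≤ 2 * U := by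
  have hU : 0 ≤ U := hw.trans hwU
  have hpos : 0 < W + τ - 1 := pos_of_mul_pos_right ((mul_pos hη (by linarith)).trans_le h) hw
  have hsqrt : √(1 - τ) ≤ U := (Real.sqrt_le_left hU).2 (by linarith)
  have hcbrt : η ^ ((1 : ℝ) / 3) ≤ U := by
    refine (rpow_one_third_le_iff hη.le hU).2 ?_
    calc η ≤ η * (W + τ) := le_mul_of_one_le_right hη.le (by linarith)
      _ ≤ w * (W + τ - 1) := h
      _ ≤ U * U ^ 2 := mul_le_mul hwU (by linarith) hpos.le hU
      _ = U ^ 3 := by ring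
  linarith

lemma le_max_mul_rpow_one_third_add_sqrt {L w W D η τ : ℝ} (hL : 0 ≤ L) (hLw : L ≤ w)
    (hLW : L ^ 2 ≤ W) (hWD : W + τ ≤ D) (hη : 0 ≤ η) (hτ : 0 ≤ τ) (hτ1 : τ ≤ 1)
    (h : w * (W + τ - 1) ≤ η * (W + τ)) :
    L ≤ max 2 ((2 * D) ^ ((1 : ℝ) / 3)) * (η ^ ((1 : ℝ) / 3) + √(1 - τ)) := by
  have hD : 0 ≤ D := by nlinarith
  have hcbrt : 0 ≤ η ^ ((1 : ℝ) / 3) := by positivity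
  have hsqrt := Real.sqrt_nonneg (1 - τ)
  suffices L ≤ 2 * √(1 - τ) ∨ L ≤ (2 * D) ^ ((1 : ℝ) / 3) * η ^ ((1 : ℝ) / 3) by
    have h2 := le_max_left 2 ((2 * D) ^ ((1 : ℝ) / 3))
    have hD3 := le_max_right 2 ((2 * D) ^ ((1 : ℝ) / 3))
    rcases this with h' | h' <;> nlinarith
  by_contra! hcon
  have hs : (1 - τ) * 4 < L ^ 2 := by
    have := Real.sq_sqrt (by linarith : 0 ≤ 1 - τ)
    nlinarith
  have : L ^ 3 ≤ 2 * D * η := by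
    nlinarith [mul_le_mul_of_nonneg_right hLw (by nlinarith : 0 ≤ W + τ - 1),
      mul_le_mul_of_nonneg_left hWD hη]
  rw [← Real.mul_rpow (by positivity) hη] at hcon
  exact hcon.2.not_ge ((le_rpow_one_third_iff hL (by positivity)).2 this)

lemma mul_sq_add_bounds_of_mul_eq {v w W L U τ : ℝ} (hv : 0 ≤ v) (heq : v * (W + τ) = w)
    (hw : w ∈ Set.Icc L U) (hW : W ∈ Set.Icc (L ^ 2) (U ^ 2)) :
    L ≤ v * (U ^ 2 + τ) ∧ v * (L ^ 2 + τ) ≤ U := by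
  obtain ⟨hwL, hwU⟩ := hw
  obtain ⟨hWL, hWU⟩ := hW
  constructor <;> nlinarith [mul_le_mul_of_nonneg_left hWU hv, mul_le_mul_of_nonneg_left hWL hv]

lemma div_mul_le_of_le_mul_sq_add {κ₀ κ₁ a A m v τ : ℝ} (hκ₀ : 0 < κ₀) (hκ₁ : 0 ≤ κ₁)
    (ha : 0 ≤ a) (hA : a ≤ A) (hτ1 : τ ≤ 1) (hv : 0 ≤ v) (h : κ₁ * a ≤ v * ((κ₀ * a) ^ 2 + τ))
    (hm : m ≤ 2 * (κ₀ * a)) : κ₁ / (2 * κ₀ * ((κ₀ * A) ^ 2 + 1)) * m ≤ v := by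
  have hD : (κ₀ * a) ^ 2 + τ ≤ (κ₀ * A) ^ 2 + 1 := by
    have : (κ₀ * a) ^ 2 ≤ (κ₀ * A) ^ 2 := by gcongr
    linarith
  calc κ₁ / (2 * κ₀ * ((κ₀ * A) ^ 2 + 1)) * m
        ≤ κ₁ / (2 * κ₀ * ((κ₀ * A) ^ 2 + 1)) * (2 * (κ₀ * a)) :=
        mul_le_mul_of_nonneg_left hm (by positivity)
    _ = κ₁ * a / ((κ₀ * A) ^ 2 + 1) := by field_simp
    _ ≤ v * ((κ₀ * A) ^ 2 + 1) / ((κ₀ * A) ^ 2 + 1) :=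
        div_le_div_of_nonneg_right (h.trans (mul_le_mul_of_nonneg_left hD hv)) (by positivity)
    _ = v := by field_simp

lemma le_div_mul_of_mul_sq_add_le {κ₀ κ₁ a η v B τ : ℝ} (hκ₁ : 0 < κ₁) (hκ₁κ₀ : κ₁ ≤ κ₀)
    (hη : 0 ≤ η) (hτ : 0 ≤ τ) (hτ1 : τ ≤ 1) (hv : 0 ≤ v) (h : v * ((κ₁ * a) ^ 2 + τ) ≤ κ₀ * a)
    (hm : η ^ ((1 : ℝ) / 3) + √(1 - τ) ≤ 2 * (κ₀ * a))
    (hB : κ₁ * a ≤ B * (η ^ ((1 : ℝ) / 3) + √(1 - τ))) :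
    v ≤ 4 * κ₀ ^ 3 * B / κ₁ ^ 3 * (η ^ ((1 : ℝ) / 3) + √(1 - τ)) := by
  set m := η ^ ((1 : ℝ) / 3) + √(1 - τ)
  have hm0 : 0 ≤ m := by positivity
  have hm2 : 1 - τ ≤ m ^ 2 := by
    nlinarith [Real.sq_sqrt (by linarith : 0 ≤ 1 - τ), Real.sqrt_nonneg (1 - τ),
      Real.rpow_nonneg hη ((1 : ℝ) / 3)]
  have hκ₀ : 0 < κ₀ := hκ₁.trans_le hκ₁κ₀
  set q := κ₁ / (2 * κ₀) with hq_def
  have hq : 0 < q := by positivity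
  have hq1 : q ≤ 1 := by rw [div_le_one (by positivity)]; linarith
  have hqm : q * m ≤ κ₁ * a := by
    calc q * m ≤ q * (2 * (κ₀ * a)) := mul_le_mul_of_nonneg_left hm hq.le
      _ = κ₁ * a := by rw [hq_def]; field_simp
  -- `m ^ 2 ≥ 1 - τ` keeps `(κ₁ * a) ^ 2 + τ` away from `0` uniformly in `τ`.
  have hden : q ^ 2 ≤ (κ₁ * a) ^ 2 + τ := by
    have : (q * m) ^ 2 ≤ (κ₁ * a) ^ 2 := pow_le_pow_left₀ (by positivity) hqm 2
    nlinarith [pow_le_one₀ hq.le hq1 (n := 2)]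
  have : v * q ^ 2 * κ₁ ≤ κ₀ * (B * m) := by
    nlinarith [mul_le_mul_of_nonneg_left hden hv]
  rw [show 4 * κ₀ ^ 3 * B / κ₁ ^ 3 * m = κ₀ * (B * m) / (q ^ 2 * κ₁) by
      rw [hq_def]; field_simp; ring, le_div_iff₀ (by positivity)]
  linarith

lemma mul_add_eq_of_one_div_eq {x p q τ : ℝ} (hx : x ≠ 0) (hq : q ≠ 0)
    (h : 1 / x = p + τ / q) : x * (q * p + τ) = q := by
  field_simp at h
  linear_combination -h

namespace IsDysonSolution

variable {n : ℕ} {S : Matrix (Fin n) (Fin n) ℝ} {τ η κ₀ κ₁ a : ℝ} {v₁ v₂ : Fin n → ℝ}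

lemma denom_pos (hS : ∀ i j, 0 ≤ S i j) (hη : 0 < η) (h : IsDysonSolution S τ η v₁ v₂)
    (i : Fin n) : 0 < η + (Sᵀ *ᵥ v₁) i ∧ 0 < η + (S *ᵥ v₂) i :=
  ⟨by linarith [mulVec_nonneg_of_nonneg (S := Sᵀ) (fun i j => hS j i) (fun j => (h.1 j).le) i],
    by linarith [mulVec_nonneg_of_nonneg hS (fun j => (h.2.1 j).le) i]⟩

lemma mul_eq_left (hS : ∀ i j, 0 ≤ S i j) (hη : 0 < η) (h : IsDysonSolution S τ η v₁ v₂)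
    (i : Fin n) :
    v₁ i * ((η + (Sᵀ *ᵥ v₁) i) * (η + (S *ᵥ v₂) i) + τ) = η + (Sᵀ *ᵥ v₁) i :=
  mul_add_eq_of_one_div_eq (h.1 i).ne' (h.denom_pos hS hη i).1.ne' (h.2.2.1 i)

lemma mul_eq_right (hS : ∀ i j, 0 ≤ S i j) (hη : 0 < η) (h : IsDysonSolution S τ η v₁ v₂)
    (i : Fin n) :
    v₂ i * ((η + (Sᵀ *ᵥ v₁) i) * (η + (S *ᵥ v₂) i) + τ) = η + (S *ᵥ v₂) i := by
  rw [mul_comm (η + _)]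
  exact mul_add_eq_of_one_div_eq (h.2.1 i).ne' (h.denom_pos hS hη i).2.ne' (h.2.2.2 i)

lemma sum_eq_sum (hS : ∀ i j, 0 ≤ S i j) (hη : 0 < η) (h : IsDysonSolution S τ η v₁ v₂) :
    ∑ i, v₁ i = ∑ i, v₂ i := by
  have hcross (i : Fin n) : v₁ i * (η + (S *ᵥ v₂) i) = v₂ i * (η + (Sᵀ *ᵥ v₁) i) := by
    have e₁ := h.mul_eq_left hS hη i
    have e₂ := h.mul_eq_right hS hη i
    have hWτ := pos_of_mul_pos_right (e₁ ▸ (h.denom_pos hS hη i).1) (h.1 i).le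
    refine mul_right_cancel₀ hWτ.ne' ?_
    linear_combination (η + (S *ᵥ v₂) i) * e₁ - (η + (Sᵀ *ᵥ v₁) i) * e₂
  have hdot : ∑ i, v₂ i * (Sᵀ *ᵥ v₁) i = ∑ i, v₁ i * (S *ᵥ v₂) i := by
    change v₂ ⬝ᵥ (Sᵀ *ᵥ v₁) = v₁ ⬝ᵥ (S *ᵥ v₂)
    rw [mulVec_transpose, dotProduct_comm, dotProduct_mulVec]
  have hsum := Finset.sum_congr rfl fun i (_ : i ∈ Finset.univ) => hcross i
  simp only [mul_add, Finset.sum_add_distrib, ← Finset.sum_mul, hdot] at hsum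
  exact mul_right_cancel₀ hη.ne' (by linarith)

lemma mean_nonneg (h : IsDysonSolution S τ η v₁ v₂) : 0 ≤ (∑ j, v₁ j) / n :=
  div_nonneg (Finset.sum_nonneg fun j _ => (h.1 j).le) n.cast_nonneg

lemma denom_mem_Icc (hκ₁ : 0 ≤ κ₁) (hκ₁1 : κ₁ ≤ 1) (hκ₀ : 1 ≤ κ₀)
    (hS : ∀ i j, κ₁ / n ≤ S i j ∧ S i j ≤ κ₀ / n) (hη : 0 < η)
    (h : IsDysonSolution S τ η v₁ v₂) (ha : a = η + (∑ j, v₁ j) / n) (i : Fin n) :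
    η + (Sᵀ *ᵥ v₁) i ∈ Set.Icc (κ₁ * a) (κ₀ * a) ∧
      η + (S *ᵥ v₂) i ∈ Set.Icc (κ₁ * a) (κ₀ * a) := by
  obtain ⟨l₁, u₁⟩ := mulVec_mem_Icc (S := Sᵀ) (fun i j => hS j i) (fun j => (h.1 j).le) i
  obtain ⟨l₂, u₂⟩ := mulVec_mem_Icc hS (fun j => (h.2.1 j).le) i
  rw [← h.sum_eq_sum (nonneg_of_entry_bounds hκ₁ hS) hη] at l₂ u₂
  have hμ := h.mean_nonneg
  subst ha
  refine ⟨⟨?_, ?_⟩, ?_, ?_⟩ <;> nlinarith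

lemma denom_mul_mem_Icc (hκ₁ : 0 ≤ κ₁) (hκ₁1 : κ₁ ≤ 1) (hκ₀ : 1 ≤ κ₀)
    (hS : ∀ i j, κ₁ / n ≤ S i j ∧ S i j ≤ κ₀ / n) (hη : 0 < η)
    (h : IsDysonSolution S τ η v₁ v₂) (ha : a = η + (∑ j, v₁ j) / n) (i : Fin n) :
    (η + (Sᵀ *ᵥ v₁) i) * (η + (S *ᵥ v₂) i) ∈ Set.Icc ((κ₁ * a) ^ 2) ((κ₀ * a) ^ 2) := by
  obtain ⟨⟨l₁, u₁⟩, l₂, u₂⟩ := h.denom_mem_Icc hκ₁ hκ₁1 hκ₀ hS hη ha i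
  have hL : 0 ≤ κ₁ * a := mul_nonneg hκ₁ (by linarith [h.mean_nonneg])
  rw [sq, sq]
  exact ⟨mul_le_mul l₁ l₂ hL (hL.trans l₁),
    mul_le_mul u₁ u₂ (hL.trans l₂) (hL.trans (l₁.trans u₁))⟩

lemma mul_sq_add_bounds (hκ₁ : 0 ≤ κ₁) (hκ₁1 : κ₁ ≤ 1) (hκ₀ : 1 ≤ κ₀)
    (hS : ∀ i j, κ₁ / n ≤ S i j ∧ S i j ≤ κ₀ / n) (hη : 0 < η)
    (h : IsDysonSolution S τ η v₁ v₂) (ha : a = η + (∑ j, v₁ j) / n) (i : Fin n) :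
    (κ₁ * a ≤ v₁ i * ((κ₀ * a) ^ 2 + τ) ∧ v₁ i * ((κ₁ * a) ^ 2 + τ) ≤ κ₀ * a) ∧
      (κ₁ * a ≤ v₂ i * ((κ₀ * a) ^ 2 + τ) ∧ v₂ i * ((κ₁ * a) ^ 2 + τ) ≤ κ₀ * a) := by
  have hS₀ := nonneg_of_entry_bounds hκ₁ hS
  obtain ⟨hw₁, hw₂⟩ := h.denom_mem_Icc hκ₁ hκ₁1 hκ₀ hS hη ha i
  have hW := h.denom_mul_mem_Icc hκ₁ hκ₁1 hκ₀ hS hη ha i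
  exact ⟨mul_sq_add_bounds_of_mul_eq (h.1 i).le (h.mul_eq_left hS₀ hη i) hw₁ hW,
    mul_sq_add_bounds_of_mul_eq (h.2.1 i).le (h.mul_eq_right hS₀ hη i) hw₂ hW⟩

lemma scale_le [NeZero n] (hκ₁ : 0 < κ₁) (hκ₁1 : κ₁ ≤ 1) (hκ₀ : 1 ≤ κ₀)
    (hS : ∀ i j, κ₁ / n ≤ S i j ∧ S i j ≤ κ₀ / n) (hη : 0 < η) (hη1 : η ≤ 1) (hτ : 0 ≤ τ)
    (h : IsDysonSolution S τ η v₁ v₂) (ha : a = η + (∑ j, v₁ j) / n) :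
    a ≤ 1 + κ₀ / κ₁ ^ 2 := by
  obtain ⟨i, -, hi⟩ := Finset.exists_le_of_sum_le (f := fun _ => (∑ j, v₁ j) / n) (g := v₁)
    Finset.univ_nonempty (by simp [mul_div_cancel₀ _ (NeZero.ne (n : ℝ))])
  have hv₁ := (h.mul_sq_add_bounds hκ₁.le hκ₁1 hκ₀ hS hη ha i).1.2
  subst ha
  refine add_le_one_add_div_sq hκ₁ (by linarith) hη1 h.mean_nonneg hτ ?_
  exact (mul_le_mul_of_nonneg_right hi (by positivity)).trans hv₁

lemma rpow_one_third_add_sqrt_le_scale [NeZero n] (hκ₁ : 0 < κ₁) (hκ₁1 : κ₁ ≤ 1)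
    (hκ₀ : 1 ≤ κ₀) (hS : ∀ i j, κ₁ / n ≤ S i j ∧ S i j ≤ κ₀ / n) (hρ : specRad S = 1)
    (hη : 0 < η) (hτ : 0 ≤ τ) (hτ1 : τ ≤ 1) (h : IsDysonSolution S τ η v₁ v₂)
    (ha : a = η + (∑ j, v₁ j) / n) :
    η ^ ((1 : ℝ) / 3) + √(1 - τ) ≤ 2 * (κ₀ * a) := by
  have hS₀ := nonneg_of_entry_bounds hκ₁.le hS
  obtain ⟨i, hi⟩ := exists_le_mulVec_of_specRad_eq_one hS₀ h.2.1 hρ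
  obtain ⟨hw₁, hw₂⟩ := h.denom_pos hS₀ hη i
  have heq := h.mul_eq_right hS₀ hη i
  refine rpow_one_third_add_sqrt_le hw₂.le (h.denom_mem_Icc hκ₁.le hκ₁1 hκ₀ hS hη ha i).2.2
    (mul_pos hw₁ hw₂) (h.denom_mul_mem_Icc hκ₁.le hκ₁1 hκ₀ hS hη ha i).2 hη hτ hτ1 ?_
  nlinarith [mul_le_mul_of_nonneg_right hi (by positivity :
    0 ≤ (η + (Sᵀ *ᵥ v₁) i) * (η + (S *ᵥ v₂) i) + τ)]

lemma scale_le_max_mul [NeZero n] (hκ₁ : 0 < κ₁) (hκ₁1 : κ₁ ≤ 1) (hκ₀ : 1 ≤ κ₀)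
    (hS : ∀ i j, κ₁ / n ≤ S i j ∧ S i j ≤ κ₀ / n) (hρ : specRad S = 1)
    (hη : 0 < η) (hτ : 0 ≤ τ) (hτ1 : τ ≤ 1) (h : IsDysonSolution S τ η v₁ v₂)
    (ha : a = η + (∑ j, v₁ j) / n) {A : ℝ} (hA : a ≤ A) :
    κ₁ * a ≤
      max 2 ((2 * ((κ₀ * A) ^ 2 + 1)) ^ ((1 : ℝ) / 3)) * (η ^ ((1 : ℝ) / 3) + √(1 - τ)) := by
  have hS₀ := nonneg_of_entry_bounds hκ₁.le hS
  obtain ⟨i, hi⟩ := exists_mulVec_le_of_specRad_eq_one hS₀ h.2.1 hρ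
  obtain ⟨hw₁, hw₂⟩ := h.denom_pos hS₀ hη i
  have heq := h.mul_eq_right hS₀ hη i
  have ha0 : 0 ≤ a := by linarith [h.mean_nonneg]
  obtain ⟨lW, uW⟩ := h.denom_mul_mem_Icc hκ₁.le hκ₁1 hκ₀ hS hη ha i
  have hWA : (κ₀ * a) ^ 2 ≤ (κ₀ * A) ^ 2 := by gcongr
  refine le_max_mul_rpow_one_third_add_sqrt (by positivity)
    (h.denom_mem_Icc hκ₁.le hκ₁1 hκ₀ hS hη ha i).2.1 lW (by linarith) hη.le hτ hτ1 ?_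
  nlinarith [mul_le_mul_of_nonneg_right hi (by positivity :
    0 ≤ (η + (Sᵀ *ᵥ v₁) i) * (η + (S *ᵥ v₂) i) + τ)]

end IsDysonSolution

theorem dyson_solution_inside_regime_general
    (sl su : ℝ) (hsl : 0 < sl) :
    ∃ c > (0:ℝ), ∃ C > (0:ℝ),
      ∀ (n : ℕ), 1 ≤ n → ∀ S : Matrix (Fin n) (Fin n) ℝ,
        (∀ i j, sl / n ≤ S i j ∧ S i j ≤ su / n) → specRad S = 1 →
        ∀ η : ℝ, 0 < η → η ≤ 1 → ∀ τ : ℝ, τ ∈ Set.Icc (0:ℝ) 1 →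
          ∀ v₁ v₂ : Fin n → ℝ, IsDysonSolution S τ η v₁ v₂ →
            ∀ i,
              (c * (η ^ ((1:ℝ)/3) + Real.sqrt (1 - τ)) ≤ v₁ i ∧
                v₁ i ≤ C * (η ^ ((1:ℝ)/3) + Real.sqrt (1 - τ))) ∧
              (c * (η ^ ((1:ℝ)/3) + Real.sqrt (1 - τ)) ≤ v₂ i ∧
                v₂ i ≤ C * (η ^ ((1:ℝ)/3) + Real.sqrt (1 - τ))) := by
  set κ₁ := min 1 sl
  set κ₀ := max 1 su
  have hκ₁ : 0 < κ₁ := lt_min one_pos hsl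
  have hκ₁1 : κ₁ ≤ 1 := min_le_left 1 sl
  have hκ₀ : 1 ≤ κ₀ := le_max_left 1 su
  set A := 1 + κ₀ / κ₁ ^ 2
  set B := max 2 ((2 * ((κ₀ * A) ^ 2 + 1)) ^ ((1 : ℝ) / 3))
  refine ⟨κ₁ / (2 * κ₀ * ((κ₀ * A) ^ 2 + 1)), by positivity, 4 * κ₀ ^ 3 * B / κ₁ ^ 3,
    by positivity, ?_⟩
  intro n hn S hS hρ η hη hη1 τ ⟨hτ, hτ1⟩ v₁ v₂ h i
  have : NeZero n := ⟨by omega⟩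
  have hS' (i j : Fin n) : κ₁ / n ≤ S i j ∧ S i j ≤ κ₀ / n :=
    ⟨(div_le_div_of_nonneg_right (min_le_right 1 sl) n.cast_nonneg).trans (hS i j).1,
      (hS i j).2.trans (div_le_div_of_nonneg_right (le_max_right 1 su) n.cast_nonneg)⟩
  obtain ⟨a, ha⟩ : ∃ a, a = η + (∑ j, v₁ j) / n := ⟨_, rfl⟩
  have ha0 : 0 ≤ a := by linarith [h.mean_nonneg]
  have hA := h.scale_le hκ₁ hκ₁1 hκ₀ hS' hη hη1 hτ ha
  have hm := h.rpow_one_third_add_sqrt_le_scale hκ₁ hκ₁1 hκ₀ hS' hρ hη hτ hτ1 ha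
  have hB := h.scale_le_max_mul hκ₁ hκ₁1 hκ₀ hS' hρ hη hτ hτ1 ha hA
  have hκ₀' : 0 < κ₀ := by linarith
  obtain ⟨⟨l₁, u₁⟩, l₂, u₂⟩ := h.mul_sq_add_bounds hκ₁.le hκ₁1 hκ₀ hS' hη ha i
  exact ⟨⟨div_mul_le_of_le_mul_sq_add hκ₀' hκ₁.le ha0 hA hτ1 (h.1 i).le l₁ hm,
      le_div_mul_of_mul_sq_add_le hκ₁ (hκ₁1.trans hκ₀) hη.le hτ hτ1 (h.1 i).le u₁ hm hB⟩,
    div_mul_le_of_le_mul_sq_add hκ₀' hκ₁.le ha0 hA hτ1 (h.2.1 i).le l₂ hm,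
      le_div_mul_of_mul_sq_add_le hκ₁ (hκ₁1.trans hκ₀) hη.le hτ hτ1 (h.2.1 i).le u₂ hm hB⟩

/-- **Inside regime behaviour of the Dyson solution:** if `ρ(S) = 1`, then
uniformly for `η ∈ (0,1]` and `τ ∈ [0,1]` the positive solution satisfies
`v_a ∼ η^{1/3} + (1-τ)^{1/2}`, with constants depending only on `s⁎, s⁺`. -/
theorem dyson_solution_inside_regime
    (sl su : ℝ) (hsl : 0 < sl) (hslsu : sl ≤ su) :
    ∃ c > (0:ℝ), ∃ C > (0:ℝ),
      ∀ (n : ℕ), 1 ≤ n → ∀ S : Matrix (Fin n) (Fin n) ℝ,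
        (∀ i j, sl / n ≤ S i j ∧ S i j ≤ su / n) → specRad S = 1 →
        ∀ η : ℝ, 0 < η → η ≤ 1 → ∀ τ : ℝ, τ ∈ Set.Icc (0:ℝ) 1 →
          ∀ v₁ v₂ : Fin n → ℝ, IsDysonSolution S τ η v₁ v₂ →
            ∀ i,
              (c * (η ^ ((1:ℝ)/3) + Real.sqrt (1 - τ)) ≤ v₁ i ∧
                v₁ i ≤ C * (η ^ ((1:ℝ)/3) + Real.sqrt (1 - τ))) ∧
              (c * (η ^ ((1:ℝ)/3) + Real.sqrt (1 - τ)) ≤ v₂ i ∧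
                v₂ i ≤ C * (η ^ ((1:ℝ)/3) + Real.sqrt (1 - τ))) :=
  dyson_solution_inside_regime_general sl su hsl
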